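/- Let d, n, T ≥ 1 and let K ⊆ [0,1]^d be convex. For each t ∈ {1,…,T} and j ∈ {1,…,n}, let f_t^j : ℝ^d → ℝ be continuous DR-submodular, nonnegative and monotone on X = [0,1]^d (x ≤ y implies f_t^j(x) ≤ f_t^j(y)) with f_t^j(0) = 0, differentiable on X with continuous gradient satisfying ‖∇f_t^j(x)‖ ≤ G for all x ∈ X, let x̂_t^j ∈ K, and define g_t^j(x) = ∫_0^1 e^{z−1} · ∇f_t^j(z x) dz. Then for every i ∈ {1,…,n} and every x ∈ K: (1 − 1/e)·Σ_{t=1}^T Σ_{j=1}^n f_t^j(x) − Σ_{t=1}^T Σ_{j=1}^n f_t^j(x̂_t^i) ≤ Σ_{t=1}^T Σ_{j=1}^n ⟨g_t^j(x̂_t^j), x − x̂_t^i⟩ + 2G·Σ_{t=1}^T Σ_{j=1}^n ‖x̂_t^j − x̂_t^i‖. -/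

import Mathlib

/-!
For monotone DR-submodular `f` on the cube, the gradient is nonnegative and coordinatewise
antitone. Hence `t ↦ f (u + t • w)` is concave for `w ≥ 0`, and comparing `f x` with `f (x ⊔ u)`
gives `f x - f u ≤ ⟪∇f u, x⟫`. Apply this at `u = z • y`, weight by `exp (z - 1)` and integrate over
`z ∈ [0, 1]`: since `exp (z - 1) * (f (z • y) + ⟪∇f (z • y), y⟫)` is the derivative of
`exp (z - 1) * f (z • y)` and `f 0 = 0`, this is the boosting inequality
`(1 - 1/e) f x - f y ≤ ⟪g y, x - y⟫`. Replacing `y = x̂ₜʲ` by `x̂ₜⁱ` costs `G ‖x̂ₜʲ - x̂ₜⁱ‖` twice,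
once because `f` is `G`-Lipschitz and once because `‖g y‖ ≤ G`.
-/

open MeasureTheory Finset

noncomputable section

/-- The unit cube `[0,1]^d` in `ℝ^d` (with Euclidean structure). -/
def cube (d : ℕ) : Set (EuclideanSpace ℝ (Fin d)) :=
  {x | ∀ i, x i ∈ Set.Icc (0 : ℝ) 1}

/-- `f` is continuous DR-submodular on the unit cube `[0,1]^d`: for coordinatewise
comparable points `x ≤ y` in the cube and any feasible move of size `z ≥ 0` along a
coordinate direction, the gain at `x` dominates the gain at `y`. -/
def DRSubmodularOn (d : ℕ) (f : EuclideanSpace ℝ (Fin d) → ℝ) : Prop :=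
  ∀ x y : EuclideanSpace ℝ (Fin d), x ∈ cube d → y ∈ cube d → (∀ i, x i ≤ y i) →
    ∀ (j : Fin d) (z : ℝ), 0 ≤ z →
      x + z • EuclideanSpace.single j (1 : ℝ) ∈ cube d →
      y + z • EuclideanSpace.single j (1 : ℝ) ∈ cube d →
      f (y + z • EuclideanSpace.single j (1 : ℝ)) - f y ≤
        f (x + z • EuclideanSpace.single j (1 : ℝ)) - f x

open Set Filter Topology
open scoped RealInnerProductSpace

theorem IsMinOn.hasDerivWithinAt_Icc_nonneg {φ : ℝ → ℝ} {φ' a b : ℝ}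
    (hmin : IsMinOn φ (Icc a b) a) (hφ : HasDerivWithinAt φ φ' (Icc a b) a) (hab : a < b) :
    0 ≤ φ' := by
  have h := hmin.localize.hasFDerivWithinAt_nonneg hφ.hasFDerivWithinAt
    (sub_mem_posTangentConeAt_of_segment_subset (segment_eq_Icc hab.le).le)
  rw [ContinuousLinearMap.toSpanSingleton_apply, smul_eq_mul] at h
  exact nonneg_of_mul_nonneg_right h (sub_pos.2 hab)

theorem integral_exp_sub_one : ∫ z in (0 : ℝ)..1, Real.exp (z - 1) = 1 - 1 / Real.exp 1 := by
  rw [intervalIntegral.integral_comp_sub_right (fun z => Real.exp z) 1, integral_exp]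
  simp [Real.exp_neg]

-- `z ↦ exp (z - 1) * (φ z + φ' z)` is the derivative of `z ↦ exp (z - 1) * φ z`
theorem integral_exp_mul_add_deriv {φ φ' : ℝ → ℝ}
    (hφ : ∀ z ∈ Icc (0 : ℝ) 1, HasDerivWithinAt φ (φ' z) (Icc 0 1) z)
    (hφ' : ContinuousOn φ' (Icc 0 1)) :
    ∫ z in (0 : ℝ)..1, Real.exp (z - 1) * (φ z + φ' z) = φ 1 - φ 0 / Real.exp 1 := by
  have hexp : Continuous fun z : ℝ => Real.exp (z - 1) := by fun_prop
  have hcont : ContinuousOn φ (Icc 0 1) := fun z hz => (hφ z hz).continuousWithinAt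
  have hderiv (z : ℝ) (hz : z ∈ Ioo (0 : ℝ) 1) :
      HasDerivWithinAt (fun z => Real.exp (z - 1) * φ z) (Real.exp (z - 1) * (φ z + φ' z))
        (Ioi z) z :=
    ((((Real.hasDerivAt_exp (z - 1)).comp_sub_const z 1).hasDerivWithinAt.mul
      (hφ z (Ioo_subset_Icc_self hz))).congr_deriv (mul_add _ _ _).symm).mono_of_mem_nhdsWithin
        (Icc_mem_nhdsGT_of_mem (Ioo_subset_Ico_self hz))
  rw [intervalIntegral.integral_eq_sub_of_hasDeriv_right_of_le zero_le_one
    (hexp.continuousOn.mul hcont) hderiv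
    ((hexp.continuousOn.mul (hcont.add hφ')).intervalIntegrable_of_Icc zero_le_one)]
  simp [Real.exp_neg, div_eq_inv_mul]

theorem norm_integral_exp_smul_le {E F : Type*} [NormedAddCommGroup E] [NormedSpace ℝ E]
    [NormedAddCommGroup F] [NormedSpace ℝ F] {f' : E → F} {y : E} {G : ℝ} (hbdd : ∀ z ∈ Icc (0 : ℝ) 1, ‖f' (z • y)‖ ≤ G) :
    ‖∫ z in (0 : ℝ)..1, Real.exp (z - 1) • f' (z • y)‖ ≤ G := by
  simpa using intervalIntegral.norm_integral_le_of_norm_le_const (a := 0) (b := 1) fun z hz => by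
    rw [uIoc_of_le zero_le_one] at hz
    rw [norm_smul, Real.norm_of_nonneg (Real.exp_pos _).le]
    have hexp : Real.exp (z - 1) ≤ 1 := Real.exp_le_one_iff.2 (by linarith [hz.2])
    exact (mul_le_of_le_one_left (norm_nonneg _) hexp).trans (hbdd z (Ioc_subset_Icc_self hz))

section InnerProductSpace

variable {E : Type*} [NormedAddCommGroup E] [InnerProductSpace ℝ E] [CompleteSpace E]
  {f : E → ℝ} {f' : E → E}

theorem HasGradientWithinAt.hasDerivWithinAt_add_smul {g a v : E} {S : Set E} {s : Set ℝ}
    {t : ℝ} (hf : HasGradientWithinAt f g S (a + t • v))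
    (hs : MapsTo (fun z : ℝ => a + z • v) s S) :
    HasDerivWithinAt (fun z : ℝ => f (a + z • v)) ⟪g, v⟫ s t := by
  have hline : HasDerivWithinAt (fun z : ℝ => a + z • v) v s t := by
    simpa using (((hasDerivAt_id t).smul_const v).const_add a).hasDerivWithinAt
  simpa [Function.comp_def] using hf.hasFDerivWithinAt.comp_hasDerivWithinAt t hline hs

theorem Convex.image_sub_le_mul_norm_sub_of_norm_gradient_le {S : Set E} {G : ℝ}
    (hS : Convex ℝ S) (hf : ∀ x ∈ S, HasGradientWithinAt f (f' x) S x)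
    (hbdd : ∀ x ∈ S, ‖f' x‖ ≤ G) {x y : E} (hx : x ∈ S) (hy : y ∈ S) :
    f y - f x ≤ G * ‖y - x‖ :=
  (le_abs_self _).trans <| hS.norm_image_sub_le_of_norm_hasFDerivWithin_le
    (fun z hz => (hf z hz).hasFDerivWithinAt) (by simpa using hbdd) hx hy

theorem inner_intervalIntegral_left {F : ℝ → E} {a b : ℝ} (hF : IntervalIntegrable F volume a b)
    (v : E) : ⟪∫ z in a..b, F z, v⟫ = ∫ z in a..b, ⟪F z, v⟫ := by
  have h := (innerSL ℝ v).intervalIntegral_comp_comm hF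
  simp only [innerSL_apply_apply] at h
  rw [real_inner_comm, ← h]
  simp_rw [real_inner_comm]

theorem boosting_inequality {S : Set E} {x y : E}
    (hgrad : ∀ z ∈ Icc (0 : ℝ) 1, HasGradientWithinAt f (f' (z • y)) S (z • y))
    (hcont : ContinuousOn f' S) (hray : ∀ z ∈ Icc (0 : ℝ) 1, z • y ∈ S) (hzero : f 0 = 0)
    (hkey : ∀ z ∈ Icc (0 : ℝ) 1, f x - f (z • y) ≤ ⟪f' (z • y), x⟫) :
    (1 - 1 / Real.exp 1) * f x - f y ≤
      ⟪∫ z in (0 : ℝ)..1, Real.exp (z - 1) • f' (z • y), x - y⟫ := by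
  have hderiv (z : ℝ) (hz : z ∈ Icc (0 : ℝ) 1) :
      HasDerivWithinAt (fun z : ℝ => f (z • y)) ⟪f' (z • y), y⟫ (Icc 0 1) z := by
    have h := hgrad z hz
    rw [← zero_add (z • y)] at h
    simpa using h.hasDerivWithinAt_add_smul fun z hz => by simpa using hray z hz
  have hexp : Continuous fun z : ℝ => Real.exp (z - 1) := by fun_prop
  have hf'ray : ContinuousOn (fun z : ℝ => f' (z • y)) (Icc 0 1) := hcont.comp (by fun_prop) hray
  have hfray : ContinuousOn (fun z : ℝ => f (z • y)) (Icc 0 1) :=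
    fun z hz => (hderiv z hz).continuousWithinAt
  have hD : ContinuousOn (fun z : ℝ => Real.exp (z - 1) * (f (z • y) + ⟪f' (z • y), y⟫))
      (Icc 0 1) := hexp.continuousOn.mul (hfray.add (hf'ray.inner continuousOn_const))
  have hint {φ : ℝ → ℝ} (hφ : ContinuousOn φ (Icc 0 1)) : IntervalIntegrable φ volume 0 1 :=
    hφ.intervalIntegrable_of_Icc zero_le_one
  have hftc : ∫ z in (0 : ℝ)..1, Real.exp (z - 1) * (f (z • y) + ⟪f' (z • y), y⟫) = f y := by
    simpa [hzero] using integral_exp_mul_add_deriv hderiv (hf'ray.inner continuousOn_const)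
  calc (1 - 1 / Real.exp 1) * f x - f y
      = ∫ z in (0 : ℝ)..1,
          (Real.exp (z - 1) * f x - Real.exp (z - 1) * (f (z • y) + ⟪f' (z • y), y⟫)) := by
        rw [intervalIntegral.integral_sub (hint (by fun_prop)) (hint hD),
          intervalIntegral.integral_mul_const, integral_exp_sub_one, hftc]
    _ ≤ ∫ z in (0 : ℝ)..1, Real.exp (z - 1) * ⟪f' (z • y), x - y⟫ := by
        refine intervalIntegral.integral_mono_on zero_le_one
          (hint ((hexp.continuousOn.mul continuousOn_const).sub hD))
          (hint (hexp.continuousOn.mul (hf'ray.inner continuousOn_const))) fun z hz => ?_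
        rw [← mul_sub, inner_sub_right]
        exact mul_le_mul_of_nonneg_left (by linarith [hkey z hz]) (Real.exp_pos _).le
    _ = _ := by
        rw [inner_intervalIntegral_left (F := fun z => Real.exp (z - 1) • f' (z • y))
          ((hexp.continuousOn.smul hf'ray).intervalIntegrable_of_Icc zero_le_one)]
        simp only [real_inner_smul_left]

end InnerProductSpace

theorem EuclideanSpace.inner_le_inner_of_forall_mul_le {ι : Type*} [Fintype ι]
    {a b v w : EuclideanSpace ℝ ι} (h : ∀ i, a i * v i ≤ b i * w i) : ⟪a, v⟫ ≤ ⟪b, w⟫ := by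
  simp only [PiLp.inner_apply, RCLike.inner_apply, conj_trivial]
  exact Finset.sum_le_sum fun i _ => by linarith [h i]

section Cube

variable {d : ℕ}

theorem convex_cube : Convex ℝ (cube d) := by
  intro x hx y hy a b ha hb hab i
  obtain ⟨hx0, hx1⟩ := hx i
  obtain ⟨hy0, hy1⟩ := hy i
  simp only [PiLp.add_apply, PiLp.smul_apply, smul_eq_mul]
  constructor <;> nlinarith

theorem smul_mem_cube {x : EuclideanSpace ℝ (Fin d)} (hx : x ∈ cube d) {c : ℝ}
    (hc : c ∈ Icc (0 : ℝ) 1) : c • x ∈ cube d := fun i =>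
  ⟨mul_nonneg hc.1 (hx i).1, mul_le_one₀ hc.2 (hx i).1 (hx i).2⟩

theorem add_smul_single_apply (x : EuclideanSpace ℝ (Fin d)) (z : ℝ) (j i : Fin d) :
    (x + z • EuclideanSpace.single j (1 : ℝ)) i = if i = j then x i + z else x i := by
  by_cases h : i = j <;> simp [h]

theorem add_smul_single_mem_cube {x : EuclideanSpace ℝ (Fin d)} (hx : x ∈ cube d) {j : Fin d}
    {z : ℝ} (hz : 0 ≤ z) (hj : x j + z ≤ 1) :
    x + z • EuclideanSpace.single j (1 : ℝ) ∈ cube d := by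
  intro i
  rw [add_smul_single_apply]
  split_ifs with h
  · subst h
    exact ⟨add_nonneg (hx i).1 hz, hj⟩
  · exact hx i

theorem le_add_smul_single (x : EuclideanSpace ℝ (Fin d)) {z : ℝ} (hz : 0 ≤ z) (j i : Fin d) :
    x i ≤ (x + z • EuclideanSpace.single j (1 : ℝ)) i := by
  rw [add_smul_single_apply]
  split_ifs <;> linarith

variable {f : EuclideanSpace ℝ (Fin d) → ℝ}
  {f' : EuclideanSpace ℝ (Fin d) → EuclideanSpace ℝ (Fin d)}

theorem hasDerivWithinAt_add_smul_single
    (hgrad : ∀ x ∈ cube d, HasGradientWithinAt f (f' x) (cube d) x)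
    {x : EuclideanSpace ℝ (Fin d)} (hx : x ∈ cube d) {j : Fin d} {δ : ℝ} (hδ : x j + δ ≤ 1) :
    HasDerivWithinAt (fun z : ℝ => f (x + z • EuclideanSpace.single j (1 : ℝ))) (f' x j)
      (Icc 0 δ) 0 := by
  have h : HasGradientWithinAt f (f' x) (cube d) (x + (0 : ℝ) • EuclideanSpace.single j 1) := by
    simpa using hgrad x hx
  simpa [EuclideanSpace.inner_single_right] using
    h.hasDerivWithinAt_add_smul fun z (hz : z ∈ Icc 0 δ) =>
      add_smul_single_mem_cube hx hz.1 (by linarith [hz.2])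

theorem gradient_nonneg_of_lt_one
    (hmono : ∀ x ∈ cube d, ∀ y ∈ cube d, (∀ i, x i ≤ y i) → f x ≤ f y)
    (hgrad : ∀ x ∈ cube d, HasGradientWithinAt f (f' x) (cube d) x)
    {x : EuclideanSpace ℝ (Fin d)} (hx : x ∈ cube d) {j : Fin d} (hj : x j < 1) :
    0 ≤ f' x j := by
  refine IsMinOn.hasDerivWithinAt_Icc_nonneg (fun z hz => ?_)
    (hasDerivWithinAt_add_smul_single hgrad hx (δ := 1 - x j) (by linarith)) (by linarith)
  simpa using hmono x hx _ (add_smul_single_mem_cube hx hz.1 (by linarith [hz.2]))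
    (le_add_smul_single x hz.1 j)

theorem DRSubmodularOn.gradient_le_of_lt_one (hsub : DRSubmodularOn d f)
    (hgrad : ∀ x ∈ cube d, HasGradientWithinAt f (f' x) (cube d) x)
    {x y : EuclideanSpace ℝ (Fin d)} (hx : x ∈ cube d) (hy : y ∈ cube d) (hxy : ∀ i, x i ≤ y i)
    {j : Fin d} (hxj : x j < 1) (hyj : y j < 1) : f' y j ≤ f' x j := by
  set δ := min (1 - x j) (1 - y j)
  have hδx : x j + δ ≤ 1 := by linarith [min_le_left (1 - x j) (1 - y j)]
  have hδy : y j + δ ≤ 1 := by linarith [min_le_right (1 - x j) (1 - y j)]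
  refine sub_nonneg.1 <| IsMinOn.hasDerivWithinAt_Icc_nonneg (fun z hz => ?_)
    ((hasDerivWithinAt_add_smul_single hgrad hx hδx).sub
      (hasDerivWithinAt_add_smul_single hgrad hy hδy)) (lt_min (by linarith) (by linarith))
  have := hsub x y hx hy hxy j z hz.1 (add_smul_single_mem_cube hx hz.1 (by linarith [hz.2]))
    (add_smul_single_mem_cube hy hz.1 (by linarith [hz.2]))
  simp only [mem_ofPred_eq, Pi.sub_apply, zero_smul, add_zero]
  linarith

theorem smul_apply_lt_one {x : EuclideanSpace ℝ (Fin d)} (hx : x ∈ cube d) {c : ℝ}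
    (hc : c ∈ Ioo (0 : ℝ) 1) (j : Fin d) : (c • x) j < 1 :=
  (mul_le_of_le_one_right hc.1.le (hx j).2).trans_lt hc.2

-- Monotonicity and DR-submodularity only control one-sided derivatives along `e j` at points
-- with `x j < 1`; the face `x j = 1` is reached as the limit of `c • x`, `c → 1⁻`, by continuity
-- of the gradient.
theorem tendsto_gradient_smul_nhdsLT_one (hcont : ContinuousOn f' (cube d))
    {x : EuclideanSpace ℝ (Fin d)} (hx : x ∈ cube d) (j : Fin d) :
    Tendsto (fun c : ℝ => f' (c • x) j) (𝓝[<] 1) (𝓝 (f' x j)) := by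
  have hsmul : Tendsto (fun c : ℝ => c • x) (𝓝[<] 1) (𝓝[cube d] x) := by
    refine tendsto_nhdsWithin_iff.2 ⟨?_, ?_⟩
    · exact ((continuous_id.smul continuous_const).tendsto' 1 x (one_smul ℝ x)).mono_left
        nhdsWithin_le_nhds
    · filter_upwards [Ioo_mem_nhdsLT zero_lt_one] with c hc
      exact smul_mem_cube hx (Ioo_subset_Icc_self hc)
  exact ((EuclideanSpace.proj j).continuous.tendsto _).comp ((hcont x hx).tendsto.comp hsmul)

theorem gradient_nonneg
    (hmono : ∀ x ∈ cube d, ∀ y ∈ cube d, (∀ i, x i ≤ y i) → f x ≤ f y)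
    (hgrad : ∀ x ∈ cube d, HasGradientWithinAt f (f' x) (cube d) x)
    (hcont : ContinuousOn f' (cube d)) {x : EuclideanSpace ℝ (Fin d)} (hx : x ∈ cube d)
    (j : Fin d) : 0 ≤ f' x j := by
  refine ge_of_tendsto (tendsto_gradient_smul_nhdsLT_one hcont hx j) ?_
  filter_upwards [Ioo_mem_nhdsLT zero_lt_one] with c hc
  exact gradient_nonneg_of_lt_one hmono hgrad (smul_mem_cube hx (Ioo_subset_Icc_self hc))
    (smul_apply_lt_one hx hc j)

theorem DRSubmodularOn.gradient_antitone (hsub : DRSubmodularOn d f)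
    (hgrad : ∀ x ∈ cube d, HasGradientWithinAt f (f' x) (cube d) x)
    (hcont : ContinuousOn f' (cube d)) {x y : EuclideanSpace ℝ (Fin d)} (hx : x ∈ cube d)
    (hy : y ∈ cube d) (hxy : ∀ i, x i ≤ y i) (j : Fin d) : f' y j ≤ f' x j := by
  refine le_of_tendsto_of_tendsto (tendsto_gradient_smul_nhdsLT_one hcont hy j)
    (tendsto_gradient_smul_nhdsLT_one hcont hx j) ?_
  filter_upwards [Ioo_mem_nhdsLT zero_lt_one] with c hc
  exact hsub.gradient_le_of_lt_one hgrad (smul_mem_cube hx (Ioo_subset_Icc_self hc))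
    (smul_mem_cube hy (Ioo_subset_Icc_self hc))
    (fun i => mul_le_mul_of_nonneg_left (hxy i) hc.1.le) (smul_apply_lt_one hx hc j)
    (smul_apply_lt_one hy hc j)

theorem DRSubmodularOn.sub_le_inner_gradient_of_nonneg (hsub : DRSubmodularOn d f)
    (hgrad : ∀ x ∈ cube d, HasGradientWithinAt f (f' x) (cube d) x)
    (hcont : ContinuousOn f' (cube d)) {u w : EuclideanSpace ℝ (Fin d)} (hu : u ∈ cube d)
    (huw : u + w ∈ cube d) (hw : ∀ i, 0 ≤ w i) : f (u + w) - f u ≤ ⟪f' u, w⟫ := by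
  have hseg : MapsTo (fun t : ℝ => u + t • w) (Icc 0 1) (cube d) := fun t ht =>
    convex_cube.add_smul_mem hu huw ht
  have hderiv (t : ℝ) (ht : t ∈ Icc (0 : ℝ) 1) :
      HasDerivWithinAt (fun t : ℝ => f (u + t • w) - t * ⟪f' u, w⟫)
        (⟪f' (u + t • w), w⟫ - ⟪f' u, w⟫) (Icc 0 1) t := by
    simpa using ((hgrad _ (hseg ht)).hasDerivWithinAt_add_smul hseg).fun_sub
      ((hasDerivWithinAt_id t _).mul_const ⟪f' u, w⟫)
  have hanti := antitoneOn_of_hasDerivWithinAt_nonpos (convex_Icc 0 1)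
    (fun t ht => (hderiv t ht).continuousWithinAt)
    (fun t ht => (hderiv t (interior_subset ht)).mono interior_subset) fun t ht => by
      refine sub_nonpos.2 <| EuclideanSpace.inner_le_inner_of_forall_mul_le fun i =>
        mul_le_mul_of_nonneg_right ?_ (hw i)
      refine hsub.gradient_antitone hgrad hcont hu (hseg (interior_subset ht)) (fun k => ?_) i
      simpa using mul_nonneg (interior_subset ht).1 (hw k)
  have := hanti (left_mem_Icc.2 zero_le_one) (right_mem_Icc.2 zero_le_one) zero_le_one
  simp only [one_smul, one_mul, zero_smul, add_zero, zero_mul, sub_zero] at this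
  linarith

theorem DRSubmodularOn.sub_le_inner_gradient (hsub : DRSubmodularOn d f)
    (hmono : ∀ x ∈ cube d, ∀ y ∈ cube d, (∀ i, x i ≤ y i) → f x ≤ f y)
    (hgrad : ∀ x ∈ cube d, HasGradientWithinAt f (f' x) (cube d) x)
    (hcont : ContinuousOn f' (cube d)) {x u : EuclideanSpace ℝ (Fin d)} (hx : x ∈ cube d)
    (hu : u ∈ cube d) : f x - f u ≤ ⟪f' u, x⟫ := by
  -- compare through the join `x ⊔ u = u + w`
  set w : EuclideanSpace ℝ (Fin d) := WithLp.toLp 2 fun i => max (x i) (u i) - u i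
  have huw (i : Fin d) : (u + w) i = max (x i) (u i) := by simp [w]
  have huw_mem : u + w ∈ cube d := fun i => by
    rw [huw]
    exact ⟨le_max_of_le_right (hu i).1, max_le (hx i).2 (hu i).2⟩
  have hjoin : f x ≤ f (u + w) := hmono x hx _ huw_mem fun i => by rw [huw]; exact le_max_left _ _
  have hconc := hsub.sub_le_inner_gradient_of_nonneg hgrad hcont hu huw_mem fun i => by simp [w]
  have hw_le : ⟪f' u, w⟫ ≤ ⟪f' u, x⟫ :=
    EuclideanSpace.inner_le_inner_of_forall_mul_le fun i =>
      mul_le_mul_of_nonneg_left (by simp [w, (hx i).1, (hu i).1])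
        (gradient_nonneg hmono hgrad hcont hu i)
  linarith

theorem DRSubmodularOn.boosting_regret_le (hsub : DRSubmodularOn d f)
    (hmono : ∀ x ∈ cube d, ∀ y ∈ cube d, (∀ i, x i ≤ y i) → f x ≤ f y) (hzero : f 0 = 0)
    (hgrad : ∀ x ∈ cube d, HasGradientWithinAt f (f' x) (cube d) x)
    (hcont : ContinuousOn f' (cube d)) {G : ℝ} (hbdd : ∀ x ∈ cube d, ‖f' x‖ ≤ G)
    {x y p : EuclideanSpace ℝ (Fin d)} (hx : x ∈ cube d) (hy : y ∈ cube d) (hp : p ∈ cube d) :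
    (1 - 1 / Real.exp 1) * f x - f p ≤
      ⟪∫ z in (0 : ℝ)..1, Real.exp (z - 1) • f' (z • y), x - p⟫ + 2 * G * ‖y - p‖ := by
  set g := ∫ z in (0 : ℝ)..1, Real.exp (z - 1) • f' (z • y)
  have hray (z : ℝ) (hz : z ∈ Icc (0 : ℝ) 1) : z • y ∈ cube d := smul_mem_cube hy hz
  have hboost : (1 - 1 / Real.exp 1) * f x - f y ≤ ⟪g, x - y⟫ :=
    boosting_inequality (fun z hz => hgrad _ (hray z hz)) hcont hray hzero
      fun z hz => hsub.sub_le_inner_gradient hmono hgrad hcont hx (hray z hz)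
  have hlip : f y - f p ≤ G * ‖y - p‖ :=
    convex_cube.image_sub_le_mul_norm_sub_of_norm_gradient_le hgrad hbdd hp hy
  have hshift : -(G * ‖y - p‖) ≤ ⟪g, y - p⟫ :=
    (abs_le.1 ((abs_real_inner_le_norm g (y - p)).trans <| mul_le_mul_of_nonneg_right
      (norm_integral_exp_smul_le fun z hz => hbdd _ (hray z hz)) (norm_nonneg _))).1
  have hsplit : ⟪g, x - p⟫ = ⟪g, x - y⟫ + ⟪g, y - p⟫ := by
    rw [← inner_add_right, sub_add_sub_cancel]
  linarith

end Cube

theorem reduction_boosting_monotone_general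
    (d n T : ℕ)
    (K : Set (EuclideanSpace ℝ (Fin d))) (hKX : K ⊆ cube d)
    (G : ℝ)
    (f : Fin T → Fin n → EuclideanSpace ℝ (Fin d) → ℝ)
    (f' : Fin T → Fin n → EuclideanSpace ℝ (Fin d) → EuclideanSpace ℝ (Fin d))
    (hsub : ∀ t j, DRSubmodularOn d (f t j))
    (hmono : ∀ t j, ∀ x ∈ cube d, ∀ y ∈ cube d, (∀ i, x i ≤ y i) → f t j x ≤ f t j y)
    (hzero : ∀ t j, f t j 0 = 0)
    (hgrad : ∀ t j, ∀ x ∈ cube d, HasGradientWithinAt (f t j) (f' t j x) (cube d) x)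
    (hcont : ∀ t j, ContinuousOn (f' t j) (cube d))
    (hbdd : ∀ t j, ∀ x ∈ cube d, ‖f' t j x‖ ≤ G)
    (xhat : Fin T → Fin n → EuclideanSpace ℝ (Fin d))
    (hxhat : ∀ t j, xhat t j ∈ K)
    (g : Fin T → Fin n → EuclideanSpace ℝ (Fin d) → EuclideanSpace ℝ (Fin d))
    (hg : ∀ t j, ∀ x ∈ K, g t j x = ∫ z in (0:ℝ)..1, Real.exp (z - 1) • f' t j (z • x)) :
    ∀ i : Fin n, ∀ x ∈ K,
      (1 - 1 / Real.exp 1) * (∑ t, ∑ j, f t j x) - ∑ t, ∑ j, f t j (xhat t i) ≤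
        (∑ t, ∑ j, (inner ℝ (g t j (xhat t j)) (x - xhat t i) : ℝ)) +
          2 * G * ∑ t, ∑ j, ‖xhat t j - xhat t i‖ := by
  intro i x hx
  have hterm (t : Fin T) (j : Fin n) :
      (1 - 1 / Real.exp 1) * f t j x - f t j (xhat t i) ≤
        ⟪g t j (xhat t j), x - xhat t i⟫ + 2 * G * ‖xhat t j - xhat t i‖ := by
    rw [hg t j _ (hxhat t j)]
    exact (hsub t j).boosting_regret_le (hmono t j) (hzero t j) (hgrad t j) (hcont t j)
      (hbdd t j) (hKX hx) (hKX (hxhat t j)) (hKX (hxhat t i))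
  calc (1 - 1 / Real.exp 1) * (∑ t, ∑ j, f t j x) - ∑ t, ∑ j, f t j (xhat t i)
      = ∑ t, ∑ j, ((1 - 1 / Real.exp 1) * f t j x - f t j (xhat t i)) := by
        simp only [Finset.mul_sum, Finset.sum_sub_distrib]
    _ ≤ ∑ t, ∑ j, (⟪g t j (xhat t j), x - xhat t i⟫ + 2 * G * ‖xhat t j - xhat t i‖) := by
        gcongr with t _ j _
        exact hterm t j
    _ = _ := by simp only [Finset.sum_add_distrib, Finset.mul_sum]

/-- deterministic core of Theorem 5: the monotone variant of the
reduction based on the boosting technique, with approximation ratio `1 - 1/e`. -/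
theorem reduction_boosting_monotone
    (d n T : ℕ) (hd : 1 ≤ d) (hn : 1 ≤ n) (hT : 1 ≤ T)
    (K : Set (EuclideanSpace ℝ (Fin d))) (hKcvx : Convex ℝ K) (hKX : K ⊆ cube d)
    (G : ℝ)
    (f : Fin T → Fin n → EuclideanSpace ℝ (Fin d) → ℝ)
    (f' : Fin T → Fin n → EuclideanSpace ℝ (Fin d) → EuclideanSpace ℝ (Fin d))
    (hsub : ∀ t j, DRSubmodularOn d (f t j))
    (hnonneg : ∀ t j, ∀ x ∈ cube d, 0 ≤ f t j x)
    (hmono : ∀ t j, ∀ x ∈ cube d, ∀ y ∈ cube d, (∀ i, x i ≤ y i) → f t j x ≤ f t j y)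
    (hzero : ∀ t j, f t j 0 = 0)
    (hgrad : ∀ t j, ∀ x ∈ cube d, HasGradientWithinAt (f t j) (f' t j x) (cube d) x)
    (hcont : ∀ t j, ContinuousOn (f' t j) (cube d))
    (hbdd : ∀ t j, ∀ x ∈ cube d, ‖f' t j x‖ ≤ G)
    (xhat : Fin T → Fin n → EuclideanSpace ℝ (Fin d))
    (hxhat : ∀ t j, xhat t j ∈ K)
    (g : Fin T → Fin n → EuclideanSpace ℝ (Fin d) → EuclideanSpace ℝ (Fin d))
    (hg : ∀ t j, ∀ x ∈ K, g t j x = ∫ z in (0:ℝ)..1, Real.exp (z - 1) • f' t j (z • x)) :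
    ∀ i : Fin n, ∀ x ∈ K,
      (1 - 1 / Real.exp 1) * (∑ t, ∑ j, f t j x) - ∑ t, ∑ j, f t j (xhat t i) ≤
        (∑ t, ∑ j, (inner ℝ (g t j (xhat t j)) (x - xhat t i) : ℝ)) +
          2 * G * ∑ t, ∑ j, ‖xhat t j - xhat t i‖ :=
  reduction_boosting_monotone_general d n T K hKX G f f' hsub hmono hzero hgrad hcont hbdd xhat
    hxhat g hg
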